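/- Lookahead refinement preserves monotonicity: if a VTS V is monotonic, then its lookahead-refined VTS V' (with verdict function λ_{|Q|}) is also monotonic. -/
import Mathlib


/-- A transition system (S, Act, I, T). -/
structure TS (S A : Type) where
  init : Set S
  rel : Set (S × A × S)

namespace TS

variable {S A : Type}

/-- Post(X, As): the set of As-successors of X. -/
def post (M : TS S A) (X : Set S) (As : Set A) : Set S :=
  {s' | ∃ s ∈ X, ∃ a ∈ As, (s, a, s') ∈ M.rel}

/-- The set of w-reachable states: reach(ε) = I, reach(w·a) = Post(reach(w), {a}). -/
def reach (M : TS S A) (w : List A) : Set S :=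
  w.foldl (fun X a => M.post X {a}) M.init

/-- The language of a TS: the set of accepted words, i.e. those with reach(w) ≠ ∅. -/
def lang (M : TS S A) : Set (List A) := {w | M.reach w ≠ ∅}

end TS

/-- A verdict transition system (VTS): a TS together with a verdict function. -/
structure VTS (Q A Λ : Type) extends TS Q A where
  verdict : Q → Λ

variable {Q A Λ : Type} [CompleteLattice Λ]

/-- The verdict yielded by a VTS for a trace w: the join of the verdicts of
the w-reachable states. -/
def VTS.yield (V : VTS Q A Λ) (w : List A) : Λ :=
  sSup (V.verdict '' V.toTS.reach w)

open Classical in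
/-- One step of the lookahead refinement operator: for a monotonic state q
(all successors have verdicts ⊑ λ(q)), the new verdict is the join of the
f-verdicts of the successors of q; otherwise it stays λ(q). -/
noncomputable def refineStep (V : VTS Q A Λ) (f : Q → Λ) : Q → Λ :=
  fun q =>
    if ∀ q' ∈ V.toTS.post {q} Set.univ, V.verdict q' ≤ V.verdict q then
      sSup (f '' V.toTS.post {q} Set.univ)
    else V.verdict q

/-- The lookahead-refined verdict functions: λ₀ = λ, λ_{i+1} = refineStep λ_i. -/
noncomputable def lam (V : VTS Q A Λ) (i : ℕ) : Q → Λ :=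
  (refineStep V)^[i] V.verdict

/-- The lookahead-refined VTS: same transition structure, verdicts λ_{|Q|}. -/
noncomputable def lookahead [Fintype Q] (V : VTS Q A Λ) : VTS Q A Λ :=
  { toTS := V.toTS, verdict := lam V (Fintype.card Q) }

/-- A VTS is monotonic iff every state's successors have verdicts at least as
specific as the state's own verdict. -/
def VTS.Monotonic (V : VTS Q A Λ) : Prop :=
  ∀ q : Q, ∀ q' ∈ V.toTS.post {q} Set.univ, V.verdict q' ≤ V.verdict q

lemma lam_succ (V : VTS Q A Λ) (hmono : V.Monotonic) (i : ℕ) (q : Q) :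
    lam V (i + 1) q = sSup (lam V i '' V.toTS.post {q} Set.univ) := by
  have : lam V (i + 1) = refineStep V (lam V i) := by
    simp [lam, Function.iterate_succ_apply']
  rw [this, refineStep, if_pos (hmono q)]

lemma lam_anti (V : VTS Q A Λ) (hmono : V.Monotonic) (i : ℕ) (q : Q) :
    lam V (i + 1) q ≤ lam V i q := by
  induction i generalizing q with
  | zero =>
    rw [lam_succ V hmono]
    apply sSup_le
    rintro _ ⟨q', hq', rfl⟩
    exact hmono q q' hq'
  | succ n ih =>
    rw [lam_succ V hmono, lam_succ V hmono]
    apply sSup_le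
    rintro _ ⟨q', hq', rfl⟩
    exact le_trans (ih q') (le_sSup ⟨q', hq', rfl⟩)

/-- lookahead refinement preserves monotonicity: if V is
monotonic, then the lookahead-refined VTS (with verdict function λ_{|Q|}) is
also monotonic. -/
theorem stmt_14 [Fintype Q] (V : VTS Q A Λ) (hmono : V.Monotonic) :
    (lookahead V).Monotonic := by
  intro q q' hq'
  cases n : Fintype.card Q with
  | zero =>
    exact ((Fintype.card_eq_zero_iff.mp n).elim' q)
  | succ m =>
    show lam V (Fintype.card Q) q' ≤ lam V (Fintype.card Q) q
    rw [n]
    calc lam V (m + 1) q' ≤ lam V m q' := lam_anti V hmono m q'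
      _ ≤ sSup (lam V m '' V.toTS.post {q} Set.univ) := le_sSup ⟨q', hq', rfl⟩
      _ = lam V (m + 1) q := (lam_succ V hmono m q).symm
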